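/- The average mixing matrix of the continuous quantum walk generated by the Laplacian of the path P_n equals (1/n²)·((n-1)J + (n/2)(I + T)), where T swaps j with n+1-j. -/

import Mathlib

/-!
The Laplacian of `P_n` is diagonalised by the discrete cosine transform: for `r < n` the vector
`j ↦ cos (π r (2j + 1) / (2n))` is an eigenvector with eigenvalue `2 - 2 cos (π r / n)`. These
eigenvalues are distinct and the eigenvectors are orthogonal, of squared norm `n` for `r = 0` and
`n / 2` otherwise. A spectral decomposition with distinct eigenvalues is unique up to reindexing
and zero idempotents, so the given idempotents have the same sum of Hadamard squares as the
cosine projections. Entrywise that sum reduces, via `cos² a cos² b`, to sums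
`∑_{r<n} cos (π m r / n)`, which are `1` for odd `m` and `n · [2n ∣ m]` for even `m`; the latter
produce the `I` and `T` terms.
-/

open Real Finset Matrix

theorem two_mul_sin_mul_sum_range_cos (n : ℕ) (z φ : ℝ) :
    2 * sin (z / 2) * ∑ j ∈ range n, cos (j * z + φ) =
      sin (n * z - z / 2 + φ) - sin (φ - z / 2) := by
  induction n with
  | zero => simp [neg_add_eq_sub]
  | succ n ih =>
    rw [sum_range_succ, mul_add, ih, two_mul_sin_mul_cos,
      show z / 2 - (n * z + φ) = -(n * z - z / 2 + φ) by ring, sin_neg,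
      show ((n + 1 : ℕ) : ℝ) * z - z / 2 + φ = z / 2 + (n * z + φ) by push_cast; ring]
    ring

theorem sin_pi_mul_div_ne_zero {d : ℕ} (hd : d ≠ 0) {t : ℤ} (ht : ¬ (d : ℤ) ∣ t) :
    sin (π * t / d) ≠ 0 := by
  rw [Ne, sin_eq_zero_iff]
  rintro ⟨k, hk⟩
  have hd' : (d : ℝ) ≠ 0 := by exact_mod_cast hd
  field_simp at hk
  exact ht ⟨k, by rw [mul_comm]; exact_mod_cast hk.symm⟩

theorem sum_range_cos_pi_mul_two_mul_add_one_div {n : ℕ} (hn : n ≠ 0) {m : ℤ}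
    (hm : ¬ (2 * n : ℤ) ∣ m) :
    ∑ j ∈ range n, cos (π * m * (2 * j + 1) / (2 * n)) = 0 := by
  have hsin : sin (π * m / (2 * n)) ≠ 0 := by
    simpa using sin_pi_mul_div_ne_zero (d := 2 * n) (by omega) (by exact_mod_cast hm)
  have hn' : (n : ℝ) ≠ 0 := by exact_mod_cast hn
  have h := two_mul_sin_mul_sum_range_cos n (π * m / n) (π * m / (2 * n))
  rw [show π * m / n / 2 = π * m / (2 * n) by ring,
    show n * (π * m / n) - π * m / (2 * n) + π * m / (2 * n) = m * π by field_simp; ring,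
    sub_self, sin_int_mul_pi, sin_zero, sub_zero] at h
  refine (mul_eq_zero.mp ?_).resolve_left (mul_ne_zero two_ne_zero hsin)
  rw [← h]
  congr 1; refine sum_congr rfl fun j _ => ?_; congr 1; field_simp

theorem sum_range_cos_pi_mul_odd_div {n : ℕ} (hn : n ≠ 0) {m : ℤ} (hm : Odd m) :
    ∑ r ∈ range n, cos (π * m * r / n) = 1 := by
  have hsin : sin (π * m / (2 * n)) ≠ 0 := by
    have hdvd : ¬ ((2 * n : ℕ) : ℤ) ∣ m := fun ⟨c, hc⟩ =>
      Int.not_odd_iff_even.mpr ⟨n * c, by rw [hc]; push_cast; ring⟩ hm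
    simpa using sin_pi_mul_div_ne_zero (by omega) hdvd
  have hn' : (n : ℝ) ≠ 0 := by exact_mod_cast hn
  have h := two_mul_sin_mul_sum_range_cos n (π * m / n) 0
  rw [show π * m / n / 2 = π * m / (2 * n) by ring,
    show n * (π * m / n) - π * m / (2 * n) + 0 = m * π - π * m / (2 * n) by field_simp; ring,
    sin_int_mul_pi_sub, hm.neg_one_zpow, zero_sub, sin_neg] at h
  refine mul_left_cancel₀ (mul_ne_zero two_ne_zero hsin) ?_
  calc 2 * sin (π * m / (2 * n)) * ∑ r ∈ range n, cos (π * m * r / n)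
      = 2 * sin (π * m / (2 * n)) * ∑ r ∈ range n, cos (r * (π * m / n) + 0) := by
        congr 1; refine sum_congr rfl fun r _ => ?_; ring_nf
    _ = 2 * sin (π * m / (2 * n)) * 1 := by rw [h]; ring

theorem sum_range_cos_two_pi_mul_div {n : ℕ} (hn : n ≠ 0) (t : ℤ) :
    ∑ r ∈ range n, cos (2 * π * t * r / n) = if (n : ℤ) ∣ t then (n : ℝ) else 0 := by
  have hn' : (n : ℝ) ≠ 0 := by exact_mod_cast hn
  split_ifs with ht
  · obtain ⟨c, rfl⟩ := ht
    have h1 : ∀ r : ℕ, cos (2 * π * ((n * c : ℤ) : ℝ) * r / n) = 1 := fun r => by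
      rw [show 2 * π * ((n * c : ℤ) : ℝ) * r / n = ((c * r : ℤ) : ℝ) * (2 * π) by
        push_cast; field_simp]
      exact cos_int_mul_two_pi _
    rw [sum_congr rfl fun r _ => h1 r]
    simp
  · have hsin := sin_pi_mul_div_ne_zero hn ht
    have h := two_mul_sin_mul_sum_range_cos n (2 * π * t / n) 0
    rw [show 2 * π * t / n / 2 = π * t / n by ring,
      show n * (2 * π * t / n) - π * t / n + 0 = t * (2 * π) - π * t / n by field_simp; ring,
      zero_sub, sin_neg, sin_int_mul_two_pi_sub] at h
    refine (mul_eq_zero.mp ?_).resolve_left (mul_ne_zero two_ne_zero hsin)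
    calc 2 * sin (π * t / n) * ∑ r ∈ range n, cos (2 * π * t * r / n)
        = 2 * sin (π * t / n) * ∑ r ∈ range n, cos (r * (2 * π * t / n) + 0) := by
          congr 1; refine sum_congr rfl fun r _ => ?_; ring_nf
      _ = 0 := by rw [h]; ring

theorem cos_sq_mul_cos_sq (a b : ℝ) :
    cos a ^ 2 * cos b ^ 2 =
      1 / 4 + cos (2 * a) / 4 + cos (2 * b) / 4 + cos (2 * a + 2 * b) / 8 +
        cos (2 * a - 2 * b) / 8 := by
  rw [cos_sq a, cos_sq b, cos_add, cos_sub]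
  ring

structure IsSpectralDecomposition {R ι κ : Type*} [CommRing R] [Fintype ι] [DecidableEq ι]
    [Fintype κ] (A : Matrix ι ι R) (μ : κ → R) (F : κ → Matrix ι ι R) : Prop where
  injective : Function.Injective μ
  mul_self : ∀ r, F r * F r = F r
  mul_eq_zero_of_ne : ∀ r s, r ≠ s → F r * F s = 0
  sum_eq_one : ∑ r, F r = 1
  eq_sum_smul : A = ∑ r, μ r • F r

namespace IsSpectralDecomposition

variable {R ι κ κ' : Type*} [CommRing R] [Fintype ι] [DecidableEq ι]
  [Fintype κ] [Fintype κ'] {A : Matrix ι ι R} {μ : κ → R} {F : κ → Matrix ι ι R}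
  {ν : κ' → R} {E : κ' → Matrix ι ι R}

theorem proj_mul_eq_smul (hF : IsSpectralDecomposition A μ F) (r : κ) :
    F r * A = μ r • F r := by
  rw [hF.eq_sum_smul, mul_sum, sum_eq_single r
    (fun s _ hs => by rw [Matrix.mul_smul, hF.mul_eq_zero_of_ne r s (Ne.symm hs), smul_zero])
    (fun h => absurd (mem_univ r) h), Matrix.mul_smul, hF.mul_self]

theorem mul_proj_eq_smul (hF : IsSpectralDecomposition A μ F) (r : κ) :
    A * F r = μ r • F r := by
  rw [hF.eq_sum_smul, sum_mul, sum_eq_single r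
    (fun s _ hs => by rw [Matrix.smul_mul, hF.mul_eq_zero_of_ne s r hs, smul_zero])
    (fun h => absurd (mem_univ r) h), Matrix.smul_mul, hF.mul_self]

variable [NoZeroDivisors R]

theorem mul_eq_zero_of_eigenvalue_ne (hF : IsSpectralDecomposition A μ F)
    (hE : IsSpectralDecomposition A ν E) {r : κ} {s : κ'} (h : μ r ≠ ν s) :
    F r * E s = 0 := by
  have : (μ r - ν s) • (F r * E s) = 0 := by
    rw [sub_smul, ← Matrix.smul_mul, ← hF.proj_mul_eq_smul, ← Matrix.mul_smul,
      ← hE.mul_proj_eq_smul, Matrix.mul_assoc, sub_self]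
  exact (smul_eq_zero.mp this).resolve_left (sub_ne_zero.mpr h)

theorem eq_of_eigenvalue_eq (hF : IsSpectralDecomposition A μ F)
    (hE : IsSpectralDecomposition A ν E) {r : κ} {s : κ'} (h : μ r = ν s) : F r = E s := by
  have hFr : F r = F r * E s := by
    conv_lhs => rw [← Matrix.mul_one (F r), ← hE.sum_eq_one, mul_sum]
    exact sum_eq_single s (fun s' _ hs' => hF.mul_eq_zero_of_eigenvalue_ne hE
      fun h' => hs' (hE.injective (h.symm.trans h')).symm) (fun h => absurd (mem_univ s) h)
  have hEs : E s = F r * E s := by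
    conv_lhs => rw [← Matrix.one_mul (E s), ← hF.sum_eq_one, sum_mul]
    exact sum_eq_single r (fun r' _ hr' => hF.mul_eq_zero_of_eigenvalue_ne hE
      fun h' => hr' (hF.injective (h'.trans h.symm))) (fun h => absurd (mem_univ r) h)
  rw [hFr, ← hEs]

theorem eq_zero_of_forall_eigenvalue_ne (hF : IsSpectralDecomposition A μ F)
    (hE : IsSpectralDecomposition A ν E) {r : κ} (h : ∀ s, μ r ≠ ν s) : F r = 0 := by
  rw [← Matrix.mul_one (F r), ← hE.sum_eq_one, mul_sum]
  exact sum_eq_zero fun s _ => hF.mul_eq_zero_of_eigenvalue_ne hE (h s)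

theorem map_eq_sum_ite [DecidableEq R] {M : Type*} [AddCommMonoid M]
    (hF : IsSpectralDecomposition A μ F) (hE : IsSpectralDecomposition A ν E)
    {g : Matrix ι ι R → M} (hg : g 0 = 0) (r : κ) :
    g (F r) = ∑ s, if μ r = ν s then g (F r) else 0 := by
  by_cases hr : ∃ s, μ r = ν s
  · obtain ⟨s, hs⟩ := hr
    rw [sum_eq_single s
      (fun s' _ hs' => if_neg fun h' => hs' (hE.injective (hs.symm.trans h')).symm)
      (fun h => absurd (mem_univ s) h), if_pos hs]
  · push Not at hr
    rw [hF.eq_zero_of_forall_eigenvalue_ne hE hr, hg]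
    simp only [ite_self, sum_const_zero]

theorem sum_map_eq {M : Type*} [AddCommMonoid M] (hF : IsSpectralDecomposition A μ F)
    (hE : IsSpectralDecomposition A ν E) {g : Matrix ι ι R → M} (hg : g 0 = 0) :
    ∑ r, g (F r) = ∑ s, g (E s) := by
  classical
  conv_lhs => rw [sum_congr rfl fun r _ => hF.map_eq_sum_ite hE hg r, sum_comm]
  conv_rhs => rw [sum_congr rfl fun s _ => hE.map_eq_sum_ite hF hg s]
  refine sum_congr rfl fun s _ => sum_congr rfl fun r _ => ?_
  by_cases h : μ r = ν s
  · rw [if_pos h, if_pos h.symm, hF.eq_of_eigenvalue_eq hE h]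
  · rw [if_neg h, if_neg (Ne.symm h)]

end IsSpectralDecomposition

def pathLaplacian (n : ℕ) : Matrix (Fin n) (Fin n) ℝ :=
  of fun j k => (if j = k then ((if 0 < j.val then (1 : ℝ) else 0) +
    (if j.val + 1 < n then 1 else 0)) else 0) -
    (if j.val + 1 = k.val ∨ k.val + 1 = j.val then 1 else 0)

theorem sum_range_ite_adjacent {M : Type*} [AddCommMonoid M] (f : ℕ → M) {n j : ℕ}
    (hj : j < n) :
    ∑ l ∈ range n, (if j + 1 = l ∨ l + 1 = j then f l else 0) =
      (if j + 1 < n then f (j + 1) else 0) + (if 0 < j then f (j - 1) else 0) := by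
  have hsplit : ∀ l, (if j + 1 = l ∨ l + 1 = j then f l else 0) =
      (if j + 1 = l then f l else 0) + (if j - 1 = l then (if 0 < j then f l else 0) else 0) :=
    fun l => by split_ifs <;> first | omega | simp
  simp only [hsplit, sum_add_distrib, sum_ite_eq, mem_range]
  split_ifs <;> first | omega | rfl

theorem pathLaplacian_mulVec_apply {n : ℕ} (v : ℕ → ℝ) (j : Fin n) :
    (pathLaplacian n *ᵥ fun k => v k) j =
      ((if 0 < (j : ℕ) then 1 else 0) + (if (j : ℕ) + 1 < n then 1 else 0)) * v j -
        ((if (j : ℕ) + 1 < n then v (j + 1) else 0) +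
          (if 0 < (j : ℕ) then v (j - 1) else 0)) := by
  simp only [mulVec, dotProduct, pathLaplacian, of_apply, sub_mul, sum_sub_distrib, ite_mul,
    zero_mul, one_mul, sum_ite_eq, mem_univ, if_true]
  rw [Fin.sum_univ_eq_sum_range (fun l => if (j : ℕ) + 1 = l ∨ l + 1 = j then v l else 0),
    sum_range_ite_adjacent _ j.isLt]

noncomputable def pathCos (n r : ℕ) (x : ℝ) : ℝ := cos (π * r * (2 * x + 1) / (2 * n))

theorem pathCos_zero (n : ℕ) (x : ℝ) : pathCos n 0 x = 1 := by simp [pathCos]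

theorem pathCos_neg_one (n r : ℕ) : pathCos n r (-1) = pathCos n r 0 := by
  rw [pathCos, pathCos, ← cos_neg]; ring_nf

theorem pathCos_natCast_self {n : ℕ} (hn : n ≠ 0) (r : ℕ) :
    pathCos n r n = pathCos n r (n - 1) := by
  have hn' : (n : ℝ) ≠ 0 := by exact_mod_cast hn
  rw [pathCos, pathCos, ← cos_nat_mul_two_pi_sub _ r]
  congr 1
  field_simp
  ring

theorem pathCos_add_one_add_pathCos_sub_one (n r : ℕ) (x : ℝ) :
    pathCos n r (x + 1) + pathCos n r (x - 1) = 2 * cos (π * r / n) * pathCos n r x := by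
  rw [pathCos, pathCos, pathCos, cos_add_cos]
  ring_nf

noncomputable def pathEigvec (n r : ℕ) (j : Fin n) : ℝ := pathCos n r (j : ℕ)

noncomputable def pathEigval (n r : ℕ) : ℝ := 2 - 2 * cos (π * r / n)

theorem pathLaplacian_mulVec_pathEigvec {n : ℕ} (hn : n ≠ 0) (r : ℕ) :
    pathLaplacian n *ᵥ pathEigvec n r = pathEigval n r • pathEigvec n r := by
  ext j
  change (pathLaplacian n *ᵥ fun k => pathCos n r (k : ℕ)) j =
    pathEigval n r * pathCos n r (j : ℕ)
  rw [pathLaplacian_mulVec_apply (fun l => pathCos n r l), pathEigval, Nat.cast_add, Nat.cast_one]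
  have hrec := pathCos_add_one_add_pathCos_sub_one n r (j : ℕ)
  have hup (h : ¬ (j : ℕ) + 1 < n) : pathCos n r ((j : ℕ) + 1) = pathCos n r (j : ℕ) := by
    have hjn : ((j : ℕ) : ℝ) + 1 = n := by exact_mod_cast (by omega : (j : ℕ) + 1 = n)
    rw [hjn, pathCos_natCast_self hn, ← hjn, add_sub_cancel_right]
  have hdown (h : ¬ 0 < (j : ℕ)) : pathCos n r ((j : ℕ) - 1) = pathCos n r (j : ℕ) := by
    rw [show (j : ℕ) = 0 by omega, Nat.cast_zero, zero_sub, pathCos_neg_one]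
  -- At an end vertex the missing neighbour is replaced by its mirror image.
  by_cases h0 : 0 < (j : ℕ) <;> by_cases h1 : (j : ℕ) + 1 < n <;>
    simp only [h0, h1, if_true, if_false]
  · rw [Nat.cast_pred h0]; linear_combination -hrec
  · rw [Nat.cast_pred h0]; linear_combination -hrec + hup h1
  · linear_combination -hrec + hdown h0
  · linear_combination -hrec + hup h1 + hdown h0

noncomputable def pathWeight (n r : ℕ) : ℝ := (if r = 0 then 1 else 2) / n

theorem pathWeight_ne_zero {n : ℕ} (hn : n ≠ 0) (r : ℕ) : pathWeight n r ≠ 0 := by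
  rw [pathWeight]
  split_ifs <;> simp [hn]

theorem pathEigvec_dotProduct {n : ℕ} (hn : n ≠ 0) (r s : Fin n) :
    pathEigvec n r ⬝ᵥ pathEigvec n s = if r = s then (pathWeight n r)⁻¹ else 0 := by
  have hsum (m : ℤ) (hm : |m| < 2 * n) :
      ∑ j ∈ range n, cos (π * m * (2 * j + 1) / (2 * n)) = if m = 0 then (n : ℝ) else 0 := by
    split_ifs with h0
    · simp [h0]
    · exact sum_range_cos_pi_mul_two_mul_add_one_div hn
        fun h => h0 (Int.eq_zero_of_abs_lt_dvd h hm)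
  have hprod (j : ℕ) : pathCos n r j * pathCos n s j =
      (cos (π * ((r + s : ℕ) : ℤ) * (2 * j + 1) / (2 * n)) +
        cos (π * (((r : ℤ) - s : ℤ) : ℝ) * (2 * j + 1) / (2 * n))) / 2 := by
    rw [pathCos, pathCos, eq_div_iff two_ne_zero, mul_comm, ← mul_assoc, two_mul_cos_mul_cos,
      add_comm]
    congr 2 <;> push_cast <;> ring
  simp only [dotProduct, pathEigvec]
  rw [Fin.sum_univ_eq_sum_range (fun j => pathCos n r j * pathCos n s j)]
  simp only [hprod, ← sum_div, sum_add_distrib]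
  have hr := r.isLt
  have hs := s.isLt
  rw [hsum _ (by rw [abs_lt]; omega), hsum _ (by rw [abs_lt]; omega), pathWeight]
  by_cases hrs : r = s
  · subst hrs
    by_cases h0 : (r : ℕ) = 0 <;> simp [h0]
  · have hne : (r : ℕ) ≠ s := Fin.val_ne_of_ne hrs
    rw [if_neg (by omega), if_neg (by omega), if_neg hrs, add_zero, zero_div]

noncomputable def pathIdempotent (n : ℕ) (r : Fin n) : Matrix (Fin n) (Fin n) ℝ :=
  pathWeight n r • vecMulVec (pathEigvec n r) (pathEigvec n r)

theorem pathIdempotent_mul {n : ℕ} (hn : n ≠ 0) (r s : Fin n) :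
    pathIdempotent n r * pathIdempotent n s = if r = s then pathIdempotent n r else 0 := by
  rw [pathIdempotent, pathIdempotent, smul_mul_smul_comm, vecMulVec_mul_vecMulVec,
    pathEigvec_dotProduct hn]
  split_ifs with hrs
  · subst hrs
    rw [vecMulVec_smul, smul_smul, mul_inv_cancel_right₀ (pathWeight_ne_zero hn r)]
  · rw [zero_smul, vecMulVec_zero, smul_zero]

theorem sum_pathIdempotent {n : ℕ} (hn : n ≠ 0) : ∑ r, pathIdempotent n r = 1 := by
  let W : Matrix (Fin n) (Fin n) ℝ := of fun r j => pathEigvec n r j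
  let V : Matrix (Fin n) (Fin n) ℝ := of fun r j => pathWeight n r * pathEigvec n r j
  -- Orthogonality says `V * Wᵀ = 1`; for square matrices the one-sided inverse is two-sided.
  have hVW : V * Wᵀ = 1 := by
    ext r s
    simp only [mul_apply, transpose_apply, V, W, of_apply, mul_assoc, ← mul_sum]
    rw [← dotProduct, pathEigvec_dotProduct hn, one_apply]
    split_ifs
    · exact mul_inv_cancel₀ (pathWeight_ne_zero hn r)
    · exact mul_zero _
  calc ∑ r, pathIdempotent n r = Wᵀ * V := by
        ext j k
        simp only [Matrix.sum_apply, pathIdempotent, Matrix.smul_apply, vecMulVec_apply,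
          smul_eq_mul, mul_apply, transpose_apply, V, W, of_apply]
        exact sum_congr rfl fun r _ => by ring
    _ = 1 := mul_eq_one_comm.mp hVW

theorem pathLaplacian_mul_pathIdempotent {n : ℕ} (hn : n ≠ 0) (r : Fin n) :
    pathLaplacian n * pathIdempotent n r = pathEigval n r • pathIdempotent n r := by
  rw [pathIdempotent, Matrix.mul_smul, mul_vecMulVec, pathLaplacian_mulVec_pathEigvec hn,
    smul_vecMulVec, smul_comm]

theorem pathEigval_injective {n : ℕ} (hn : n ≠ 0) :
    Function.Injective fun r : Fin n => pathEigval n r := by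
  intro r s h
  have hn' : (0 : ℝ) < n := by exact_mod_cast Nat.pos_of_ne_zero hn
  have hmem (u : Fin n) : π * (u : ℕ) / n ∈ Set.Icc 0 π := by
    refine ⟨by positivity, (div_le_iff₀ hn').mpr ?_⟩
    rw [mul_comm π, mul_comm π]
    exact mul_le_mul_of_nonneg_right (by exact_mod_cast u.isLt.le : ((u : ℕ) : ℝ) ≤ n)
      pi_pos.le
  have := injOn_cos (hmem r) (hmem s) (by simp only [pathEigval] at h; linarith)
  field_simp at this
  exact Fin.ext (by exact_mod_cast this)

theorem isSpectralDecomposition_pathLaplacian {n : ℕ} (hn : n ≠ 0) :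
    IsSpectralDecomposition (pathLaplacian n) (fun r : Fin n => pathEigval n r)
      (pathIdempotent n) where
  injective := pathEigval_injective hn
  mul_self r := by rw [pathIdempotent_mul hn, if_pos rfl]
  mul_eq_zero_of_ne r s h := by rw [pathIdempotent_mul hn, if_neg h]
  sum_eq_one := sum_pathIdempotent hn
  eq_sum_smul := by
    rw [← mul_one (pathLaplacian n), ← sum_pathIdempotent hn, mul_sum]
    exact sum_congr rfl fun r _ => pathLaplacian_mul_pathIdempotent hn r

theorem sum_range_pathCos_sq_mul_pathCos_sq {n : ℕ} (hn : n ≠ 0) {j k : ℕ} (hj : j < n)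
    (hk : k < n) :
    ∑ r ∈ range n, pathCos n r j ^ 2 * pathCos n r k ^ 2 =
      (n + 2 + n / 2 * ((if j = k then 1 else 0) + (if j + k + 1 = n then 1 else 0))) / 4 := by
  have hprod (r : ℕ) : pathCos n r j ^ 2 * pathCos n r k ^ 2 =
      1 / 4 + cos (π * ((2 * j + 1 : ℕ) : ℤ) * r / n) / 4 +
        cos (π * ((2 * k + 1 : ℕ) : ℤ) * r / n) / 4 +
        cos (2 * π * ((j + k + 1 : ℕ) : ℤ) * r / n) / 8 +
        cos (2 * π * (((j : ℤ) - k : ℤ) : ℝ) * r / n) / 8 := by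
    rw [pathCos, pathCos, cos_sq_mul_cos_sq]
    push_cast
    ring_nf
  have hdiag : (n : ℤ) ∣ ((j : ℤ) - k) ↔ j = k :=
    ⟨fun h => by have := Int.eq_zero_of_abs_lt_dvd h (by rw [abs_lt]; omega); omega,
      fun h => by rw [h, sub_self]; exact dvd_zero _⟩
  have hanti : (n : ℤ) ∣ ((j + k + 1 : ℕ) : ℤ) ↔ j + k + 1 = n :=
    ⟨fun h => by
      have := Int.eq_zero_of_abs_lt_dvd (dvd_sub h dvd_rfl) (by rw [abs_lt]; omega); omega,
      fun h => by rw [h]⟩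
  have hodd (i : ℕ) : Odd ((2 * i + 1 : ℕ) : ℤ) := by push_cast; exact odd_two_mul_add_one _
  simp only [hprod, sum_add_distrib, ← sum_div, sum_const, card_range, nsmul_eq_mul,
    sum_range_cos_pi_mul_odd_div hn (hodd j), sum_range_cos_pi_mul_odd_div hn (hodd k),
    sum_range_cos_two_pi_mul_div hn,
    hdiag, hanti]
  split_ifs <;> ring

theorem sum_hadamard_pathIdempotent_apply {n : ℕ} (hn : n ≠ 0) (j k : Fin n) :
    (∑ r, pathIdempotent n r ⊙ pathIdempotent n r) j k =
      (n - 1 + n / 2 * ((if j = k then 1 else 0) + (if (j : ℕ) + k + 1 = n then 1 else 0))) /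
        n ^ 2 := by
  have hn' : (n : ℝ) ≠ 0 := by exact_mod_cast hn
  have hterm (r : ℕ) : (pathWeight n r * (pathCos n r j * pathCos n r k)) ^ 2 =
      4 / n ^ 2 * (pathCos n r j ^ 2 * pathCos n r k ^ 2) -
        if r = 0 then 3 / n ^ 2 * (pathCos n r j ^ 2 * pathCos n r k ^ 2) else 0 := by
    rw [pathWeight]
    split_ifs <;> ring
  have hentry (r : Fin n) : (pathIdempotent n r ⊙ pathIdempotent n r) j k =
      (pathWeight n r * (pathCos n r j * pathCos n r k)) ^ 2 := by
    simp only [hadamard_apply, pathIdempotent, Matrix.smul_apply, vecMulVec_apply, pathEigvec,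
      smul_eq_mul]
    ring
  rw [Matrix.sum_apply, sum_congr rfl fun r _ => hentry r,
    Fin.sum_univ_eq_sum_range (fun r => (pathWeight n r * (pathCos n r j * pathCos n r k)) ^ 2),
    sum_congr rfl fun r _ => hterm r, sum_sub_distrib, ← mul_sum, sum_ite_eq',
    if_pos (mem_range.mpr (Nat.pos_of_ne_zero hn)), pathCos_zero, pathCos_zero,
    sum_range_pathCos_sq_mul_pathCos_sq hn j.isLt k.isLt]
  simp only [Fin.val_inj]
  field_simp
  ring

open Matrix in
theorem laplacian_average_mixing_path_general
    (n m : ℕ) (hn : 0 < n) (L : Matrix (Fin n) (Fin n) ℝ)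
    (hL : ∀ j k, L j k =
      (if j = k then ((if 0 < j.val then (1 : ℝ) else 0) + (if j.val + 1 < n then 1 else 0))
        else 0) - (if j.val + 1 = k.val ∨ k.val + 1 = j.val then 1 else 0))
    (μ : Fin m → ℝ) (F : Fin m → Matrix (Fin n) (Fin n) ℝ)
    (hμ : Function.Injective μ)
    (hidem : ∀ r, F r * F r = F r)
    (horth : ∀ r s, r ≠ s → F r * F s = 0)
    (hsum : ∑ r, F r = 1)
    (hdecomp : L = ∑ r, μ r • F r)
    (J T : Matrix (Fin n) (Fin n) ℝ)
    (hJ : ∀ j k, J j k = 1)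
    (hT : ∀ j k, T j k = if j.val + 1 + (k.val + 1) = n + 1 then 1 else 0) :
    ∑ r, (F r ⊙ F r) =
      (1 / (n : ℝ) ^ 2) • (((n : ℝ) - 1) • J + ((n : ℝ) / 2) • (1 + T)) := by
  obtain rfl : L = pathLaplacian n := Matrix.ext hL
  have hF : IsSpectralDecomposition (pathLaplacian n) μ F := ⟨hμ, hidem, horth, hsum, hdecomp⟩
  rw [hF.sum_map_eq (isSpectralDecomposition_pathLaplacian hn.ne') (g := fun X => X ⊙ X)
    (hadamard_zero 0)]
  ext j k
  have hanti : (j : ℕ) + 1 + ((k : ℕ) + 1) = n + 1 ↔ (j : ℕ) + k + 1 = n := by omega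
  simp only [sum_hadamard_pathIdempotent_apply hn.ne', Matrix.smul_apply, Matrix.add_apply,
    one_apply, hJ, hT, hanti, smul_eq_mul]
  have hn' : (n : ℝ) ≠ 0 := by exact_mod_cast hn.ne'
  field_simp

open Matrix in
/-- The average mixing matrix of the continuous quantum walk generated by the Laplacian
of the path `P_n` equals `(1/n²) ((n-1) J + (n/2)(I + T))`, where `T` swaps `j` with
`n+1-j`.  The average mixing matrix is the sum of the entrywise squares of the spectral
idempotents of the Laplacian.  (Vertices are indexed `0, …, n-1`, standing for
`1, …, n`.) -/
theorem laplacian_average_mixing_path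
    (n m : ℕ) (hn : 0 < n) (L : Matrix (Fin n) (Fin n) ℝ)
    (hL : ∀ j k, L j k =
      (if j = k then ((if 0 < j.val then (1 : ℝ) else 0) + (if j.val + 1 < n then 1 else 0))
        else 0) - (if j.val + 1 = k.val ∨ k.val + 1 = j.val then 1 else 0))
    (μ : Fin m → ℝ) (F : Fin m → Matrix (Fin n) (Fin n) ℝ)
    (hμ : Function.Injective μ)
    (hsym : ∀ r, (F r)ᵀ = F r)
    (hidem : ∀ r, F r * F r = F r)
    (horth : ∀ r s, r ≠ s → F r * F s = 0)
    (hsum : ∑ r, F r = 1)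
    (hdecomp : L = ∑ r, μ r • F r)
    (J T : Matrix (Fin n) (Fin n) ℝ)
    (hJ : ∀ j k, J j k = 1)
    (hT : ∀ j k, T j k = if j.val + 1 + (k.val + 1) = n + 1 then 1 else 0) :
    ∑ r, (F r ⊙ F r) =
      (1 / (n : ℝ) ^ 2) • (((n : ℝ) - 1) • J + ((n : ℝ) / 2) • (1 + T)) :=
  laplacian_average_mixing_path_general n m hn L hL μ F hμ hidem horth hsum hdecomp J T hJ hT
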